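/- arXiv:1010.1926 — 3 statements merged into one kernel-verified Lean document; each statement's English description precedes it below -/
import Mathlib

section
/- Let p ≥ 3 be a real number and k ∈ ℕ. Then the sum over ε ∈ {1, -1} of [((1 - 1/p)(1 + ε)(∑_{i=0}^{k-1} p^{-i}) + p^{-k}(1 - ε/p)) · (p + ε)] / (2p) equals (1 - 1/p²)(∑_{i=0}^{k} p^{-i}). -/
theorem stmt_2 (p : ℝ) (hp : 3 ≤ p) (k : ℕ) :
    ∑ ε ∈ ({1, -1} : Finset ℤ),
        (((1 - 1 / p) * (1 + (ε : ℝ)) * (∑ i ∈ Finset.range k, (1 / p) ^ i)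
            + (1 / p) ^ k * (1 - (ε : ℝ) / p)) * (p + (ε : ℝ))) / (2 * p)
      = (1 - 1 / p ^ 2) * (∑ i ∈ Finset.range (k + 1), (1 / p) ^ i) := by
  have hp0 : p ≠ 0 := by linarith
  rw [show ({1, -1} : Finset ℤ) = {1} ∪ {-1} by rfl]
  rw [Finset.sum_union (by decide), Finset.sum_singleton, Finset.sum_singleton,
    Finset.sum_range_succ]
  push_cast
  field_simp
  ring
end

section
/- Let p be an odd prime dividing the odd squarefree integer S, and α ∈ ℤ_p^×. Then the form α·x² + 2Sα·y² + 2S·z² is equivalent over ℤ_p to α·x² + αp·y² + p·z². Moreover, the square class of α in ℤ_p^×/(ℤ_p^×)² is uniquely determined by the ℤ_p-equivalence class: if α·x² + αp·y² + p·z² is ℤ_p-equivalent to α'·x² + α'p·y² + p·z² with α' ∈ ℤ_p^×, then α/α' is a square in ℤ_p^×. -/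
/-!
Write `S = p T` with `p ∤ T`, so `2S = p u` for the `p`-adic unit `u = 2T`. The binary unimodular
form `α y² + z²` represents every unit, in particular `α u⁻¹`, and a representation of it yields a
similitude of ratio `u`; this turns `p u (α y² + z²)` into `p (α y² + z²)`. For uniqueness,
evaluate an equivalence at the first basis vector: `α ≡ α' t² (mod p)`, and Hensel's lemma makes
`α / α'` a square.
-/

open Polynomial Matrix

theorem exists_equiv_diag_scale_of_mul_sq_add_sq_eq {R : Type*} [CommRing R] (a u : Rˣ) (c : R)
    {x y : R} (hxy : a * x ^ 2 + y ^ 2 = a * ↑u⁻¹) :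
    ∃ M : Matrix (Fin 3) (Fin 3) R, IsUnit M.det ∧ ∀ v : Fin 3 → R,
      a * v 0 ^ 2 + c * u * a * v 1 ^ 2 + c * u * v 2 ^ 2
        = a * (M *ᵥ v) 0 ^ 2 + a * c * (M *ᵥ v) 1 ^ 2 + c * (M *ᵥ v) 2 ^ 2 := by
  have ha := a.mul_inv
  have hu := u.mul_inv
  refine ⟨!![1, 0, 0; 0, u * x, u * ↑a⁻¹ * y; 0, u * y, -(u * x)], ?_, fun v => ?_⟩
  · have hdet : (!![1, 0, 0; 0, u * x, u * ↑a⁻¹ * y; 0, u * y, -(u * x)] :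
        Matrix (Fin 3) (Fin 3) R).det = -u := by
      simp only [det_fin_three, Fin.isValue, of_apply, cons_val', cons_val_zero, cons_val_fin_one,
        cons_val_one, one_mul, cons_val, mul_neg, mul_zero, zero_mul, neg_zero, sub_zero, add_zero]
      linear_combination (-(u ^ 2 * ↑a⁻¹ : R)) * hxy + (u ^ 2 * (x ^ 2 - ↑u⁻¹) : R) * ha
        - (u : R) * hu
    rw [hdet]
    exact u.isUnit.neg
  · simp only [Fin.isValue, mulVec, dotProduct, of_apply, cons_val', cons_val_fin_one,
      cons_val_zero, Fin.sum_univ_three, one_mul, cons_val_one, zero_mul, add_zero, cons_val,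
      zero_add, neg_mul]
    linear_combination (-(c * u ^ 2 * v 1 ^ 2) - c * u ^ 2 * ↑a⁻¹ * v 2 ^ 2 : R) * hxy
      + (c * u ^ 2 * (x ^ 2 - ↑u⁻¹ - ↑a⁻¹ * y ^ 2) * v 2 ^ 2
          - 2 * c * u ^ 2 * x * y * v 1 * v 2 : R) * ha
      + (-(c * u * a * v 1 ^ 2) - c * u * v 2 ^ 2 : R) * hu

namespace PadicInt

variable {p : ℕ} [Fact p.Prime]

theorem toZMod_eq_zero_iff_not_isUnit {z : ℤ_[p]} : toZMod z = 0 ↔ ¬IsUnit z := by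
  rw [← RingHom.mem_ker, ker_toZMod, IsLocalRing.mem_maximalIdeal, mem_nonunits_iff]

theorem isUnit_natCast_of_coprime {n : ℕ} (h : p.Coprime n) : IsUnit (n : ℤ_[p]) :=
  isUnit_iff.mpr (norm_natCast_eq_one_iff.mpr h)

theorem isUnit_two (hp : p ≠ 2) : IsUnit (2 : ℤ_[p]) := by
  exact_mod_cast isUnit_natCast_of_coprime ((Nat.coprime_primes Fact.out Nat.prime_two).mpr hp)

theorem exists_mul_sq_eq_of_toZMod_eq (hp : p ≠ 2) {a b t : ℤ_[p]} (ha : IsUnit a)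
    (hb : IsUnit b) (h : toZMod b = toZMod (a * t ^ 2)) : ∃ s, a * s ^ 2 = b := by
  have ht : IsUnit t := by
    rw [← toZMod_eq_zero_iff_not_isUnit.not_left] at hb ⊢
    rintro ht
    exact hb (by simp [h, ht])
  have hclose : ‖a * t ^ 2 - b‖ < 1 := by
    rw [← not_isUnit_iff, ← toZMod_eq_zero_iff_not_isUnit, map_sub, h, sub_self]
  have hderiv : ‖2 * a * t‖ = 1 := isUnit_iff.mp (((isUnit_two hp).mul ha).mul ht)
  have hF : aeval t (C a * X ^ 2 - C b) = a * t ^ 2 - b := by simp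
  have hF' : aeval t (derivative (C a * X ^ 2 - C b)) = 2 * a * t := by
    simp only [derivative_sub, derivative_mul, derivative_C, zero_mul, derivative_X_pow_succ,
      Nat.cast_one, map_add, map_one, pow_one, zero_add, sub_zero, coe_aeval_eq_eval, eval_mul,
      eval_C, eval_add, eval_one, eval_X]
    ring
  obtain ⟨s, hs, -⟩ := hensels_lemma (F := C a * X ^ 2 - C b) (a := t) (by
    rwa [hF, hF', hderiv, one_pow])
  exact ⟨s, by simpa [sub_eq_zero] using hs⟩

theorem exists_isUnit_eq_mul_sq_of_eq_mul_sq_add_p_mul (hp : p ≠ 2) {a b t w : ℤ_[p]}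
    (ha : IsUnit a) (hb : IsUnit b) (h : b = a * t ^ 2 + p * w) :
    ∃ s, IsUnit s ∧ b = a * s ^ 2 := by
  have hres : toZMod b = toZMod (a * t ^ 2) := by
    rw [h, map_add, map_mul _ (p : ℤ_[p]), map_natCast, ZMod.natCast_self, zero_mul, add_zero]
  obtain ⟨s, hs⟩ := exists_mul_sq_eq_of_toZMod_eq hp ha hb hres
  refine ⟨s, ?_, hs.symm⟩
  rw [← hs] at hb
  exact isUnit_pow_iff two_ne_zero |>.mp (isUnit_of_mul_isUnit_right hb)

theorem exists_mul_sq_add_sq_eq (hp : p ≠ 2) {a c : ℤ_[p]} (ha : IsUnit a) (hc : IsUnit c) :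
    ∃ x y : ℤ_[p], a * x ^ 2 + y ^ 2 = c := by
  have hcard : Fintype.card (ZMod p) % 2 = 1 := by
    rw [ZMod.card, ← Nat.odd_iff]
    exact (Fact.out : p.Prime).odd_of_ne_two hp
  have ha₀ : toZMod a ≠ 0 := toZMod_eq_zero_iff_not_isUnit.not_left.mpr ha
  obtain ⟨x₀, y₀, h₀⟩ := FiniteField.exists_root_sum_quadratic
    (degree_C_mul_X_pow 2 ha₀) (degree_X_pow_sub_C two_pos (toZMod c)) hcard
  obtain ⟨x, rfl⟩ := ZMod.ringHom_surjective toZMod x₀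
  obtain ⟨y, rfl⟩ := ZMod.ringHom_surjective toZMod y₀
  have hmod : toZMod c = toZMod (a * x ^ 2 + y ^ 2) := by
    simp only [eval_mul, eval_C, eval_pow, eval_X, eval_sub] at h₀
    simp only [map_add, map_mul, map_pow]
    linear_combination -h₀
  -- Lift the residue solution by Hensel in whichever coordinate is a unit.
  by_cases hy : IsUnit y
  · have hres : toZMod (c - a * x ^ 2) = toZMod (1 * y ^ 2) := by
      simp only [map_sub, map_mul, map_pow, map_one, hmod, map_add]
      ring
    have hunit : IsUnit (c - a * x ^ 2) := by
      rw [← toZMod_eq_zero_iff_not_isUnit.not_left, hres, one_mul, map_pow]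
      exact pow_ne_zero 2 (toZMod_eq_zero_iff_not_isUnit.not_left.mpr hy)
    obtain ⟨s, hs⟩ := exists_mul_sq_eq_of_toZMod_eq hp isUnit_one hunit hres
    exact ⟨x, s, by linear_combination hs⟩
  · have hres : toZMod c = toZMod (a * x ^ 2) := by
      rw [hmod, map_add, map_pow _ y, toZMod_eq_zero_iff_not_isUnit.mpr hy]
      ring
    obtain ⟨s, hs⟩ := exists_mul_sq_eq_of_toZMod_eq hp ha hc hres
    exact ⟨s, 0, by linear_combination hs⟩

end PadicInt

theorem stmt_10_general (p : ℕ) [Fact p.Prime] (hp : p ≠ 2) (S : ℕ)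
    (hsf : Squarefree S) (hpS : p ∣ S) (α : ℤ_[p]) (hα : IsUnit α) :
    (∃ M : Matrix (Fin 3) (Fin 3) ℤ_[p], IsUnit M.det ∧
      ∀ v : Fin 3 → ℤ_[p],
        α * (v 0) ^ 2 + 2 * (S : ℤ_[p]) * α * (v 1) ^ 2 + 2 * (S : ℤ_[p]) * (v 2) ^ 2
          = α * (M.mulVec v 0) ^ 2 + α * (p : ℤ_[p]) * (M.mulVec v 1) ^ 2
            + (p : ℤ_[p]) * (M.mulVec v 2) ^ 2) ∧
    (∀ α' : ℤ_[p], IsUnit α' →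
      (∃ M : Matrix (Fin 3) (Fin 3) ℤ_[p], IsUnit M.det ∧
        ∀ v : Fin 3 → ℤ_[p],
          α * (v 0) ^ 2 + α * (p : ℤ_[p]) * (v 1) ^ 2 + (p : ℤ_[p]) * (v 2) ^ 2
            = α' * (M.mulVec v 0) ^ 2 + α' * (p : ℤ_[p]) * (M.mulVec v 1) ^ 2
              + (p : ℤ_[p]) * (M.mulVec v 2) ^ 2) →
      ∃ β : ℤ_[p], IsUnit β ∧ α = α' * β ^ 2) := by
  refine ⟨?_, ?_⟩
  · obtain ⟨T, rfl⟩ := hpS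
    have hu : IsUnit ((2 * T : ℕ) : ℤ_[p]) := PadicInt.isUnit_natCast_of_coprime <|
      ((Nat.coprime_primes Fact.out Nat.prime_two).mpr hp).mul_right
        (Nat.coprime_of_squarefree_mul hsf)
    obtain ⟨x, y, hxy⟩ := PadicInt.exists_mul_sq_add_sq_eq hp hα (hα.mul hu.unit⁻¹.isUnit)
    have h2S : 2 * ((p * T : ℕ) : ℤ_[p]) = p * hu.unit := by
      rw [IsUnit.unit_spec]
      push_cast
      ring
    rw [h2S]
    exact exists_equiv_diag_scale_of_mul_sq_add_sq_eq hα.unit hu.unit p hxy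
  · rintro α' hα' ⟨M, -, hM⟩
    have h := hM ![1, 0, 0]
    simp only [mulVec, dotProduct, Fin.sum_univ_three, cons_val_zero, cons_val_one, cons_val_two,
      head_cons, tail_cons, mul_one, mul_zero, add_zero, one_pow, ne_eq, OfNat.ofNat_ne_zero,
      not_false_eq_true, zero_pow] at h
    exact PadicInt.exists_isUnit_eq_mul_sq_of_eq_mul_sq_add_p_mul hp hα' hα
      (t := M 0 0) (w := α' * M 1 0 ^ 2 + M 2 0 ^ 2) (by linear_combination h)

theorem stmt_10 (p : ℕ) [Fact p.Prime] (hp : p ≠ 2) (S : ℕ) (hS : Odd S)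
    (hsf : Squarefree S) (hpS : p ∣ S) (α : ℤ_[p]) (hα : IsUnit α) :
    (∃ M : Matrix (Fin 3) (Fin 3) ℤ_[p], IsUnit M.det ∧
      ∀ v : Fin 3 → ℤ_[p],
        α * (v 0) ^ 2 + 2 * (S : ℤ_[p]) * α * (v 1) ^ 2 + 2 * (S : ℤ_[p]) * (v 2) ^ 2
          = α * (M.mulVec v 0) ^ 2 + α * (p : ℤ_[p]) * (M.mulVec v 1) ^ 2
            + (p : ℤ_[p]) * (M.mulVec v 2) ^ 2) ∧
    (∀ α' : ℤ_[p], IsUnit α' →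
      (∃ M : Matrix (Fin 3) (Fin 3) ℤ_[p], IsUnit M.det ∧
        ∀ v : Fin 3 → ℤ_[p],
          α * (v 0) ^ 2 + α * (p : ℤ_[p]) * (v 1) ^ 2 + (p : ℤ_[p]) * (v 2) ^ 2
            = α' * (M.mulVec v 0) ^ 2 + α' * (p : ℤ_[p]) * (M.mulVec v 1) ^ 2
              + (p : ℤ_[p]) * (M.mulVec v 2) ^ 2) →
      ∃ β : ℤ_[p], IsUnit β ∧ α = α' * β ^ 2) :=
  stmt_10_general p hp S hsf hpS α hα
end

section
/- Let p be an odd prime and α ∈ ℤ_p^× with ε = (-α/p). Define β(m) for m ∈ ℤ_p \ {0} by the recursion β(m) = b(m) + (1/p)·β(m/p²) when p² | m (with β(m) = b(m) when p² ∤ m), where b(m) = 1 + ε·(-m/p) if p ∤ m, b(m) = 1 - ε/p if ord_p(m) = 1, and b(m) = (1 - 1/p)(1 + ε) if ord_p(m) ≥ 2. Then for ord_p(m) = 2k: β(m) = (1 - 1/p)(1 + ε)·∑_{i=0}^{k-1} p^{-i} + p^{-k}(1 + ε·(-m/p^{2k} / p)), and for ord_p(m) = 2k+1: β(m) = (1 -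 1/p)(1 + ε)·∑_{i=0}^{k-1} p^{-i} + p^{-k}(1 - ε/p). -/
theorem stmt_19 (p : ℕ) [Fact p.Prime] (hp : p ≠ 2) (ε : ℤ) (hε : ε = 1 ∨ ε = -1)
    (b β : ℤ → ℝ)
    (hb0 : ∀ m : ℤ, ¬ (p : ℤ) ∣ m → b m = 1 + (ε : ℝ) * (legendreSym p (-m) : ℤ))
    (hb1 : ∀ m : ℤ, (p : ℤ) ∣ m → ¬ (p : ℤ) ^ 2 ∣ m → b m = 1 - (ε : ℝ) / p)
    (hb2 : ∀ m : ℤ, (p : ℤ) ^ 2 ∣ m → b m = (1 - 1 / p) * (1 + (ε : ℝ)))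
    (hβ0 : ∀ m : ℤ, m ≠ 0 → ¬ (p : ℤ) ^ 2 ∣ m → β m = b m)
    (hβrec : ∀ m : ℤ, m ≠ 0 → (p : ℤ) ^ 2 ∣ m →
      β m = b m + (1 / p) * β (m / (p : ℤ) ^ 2)) :
    ∀ (k : ℕ) (m : ℤ), ¬ (p : ℤ) ∣ m →
      (β ((p : ℤ) ^ (2 * k) * m)
          = (1 - 1 / p) * (1 + (ε : ℝ)) * (∑ i ∈ Finset.range k, (1 / (p : ℝ)) ^ i)
            + (1 / (p : ℝ)) ^ k * (1 + (ε : ℝ) * (legendreSym p (-m) : ℤ))) ∧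
      (β ((p : ℤ) ^ (2 * k + 1) * m)
          = (1 - 1 / p) * (1 + (ε : ℝ)) * (∑ i ∈ Finset.range k, (1 / (p : ℝ)) ^ i)
            + (1 / (p : ℝ)) ^ k * (1 - (ε : ℝ) / p)) := by
  have hpP : p.Prime := Fact.out
  have hpZ : (p : ℤ) ≠ 0 := Int.natCast_ne_zero.mpr hpP.ne_zero
  have hp2Z : ((p : ℤ)) ^ 2 ≠ 0 := pow_ne_zero _ hpZ
  intro k
  induction k with
  | zero =>
    intro m hm
    have hm0 : m ≠ 0 := fun h => hm (h ▸ dvd_zero _)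
    have hnd2 : ¬ (p : ℤ) ^ 2 ∣ m := fun h =>
      hm (dvd_trans (dvd_pow_self _ two_ne_zero) h)
    constructor
    · simp only [Nat.mul_zero, pow_zero, one_mul, Finset.range_zero,
        Finset.sum_empty, mul_zero, zero_add]
      rw [hβ0 m hm0 hnd2, hb0 m hm]
    · have hnd2' : ¬ (p : ℤ) ^ 2 ∣ (p : ℤ) * m := by
        intro h
        rw [sq] at h
        exact hm ((mul_dvd_mul_iff_left hpZ).mp h)
      simp only [Nat.mul_zero, Nat.zero_add, pow_one, pow_zero, one_mul,
        Finset.range_zero, Finset.sum_empty, mul_zero, zero_add]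
      rw [hβ0 _ (mul_ne_zero hpZ hm0) hnd2', hb1 _ (Dvd.intro m rfl) hnd2']
  | succ k ih =>
    intro m hm
    have hm0 : m ≠ 0 := fun h => hm (h ▸ dvd_zero _)
    obtain ⟨ih1, ih2⟩ := ih m hm
    have hsum : ∑ i ∈ Finset.range (k + 1), (1 / (p : ℝ)) ^ i
        = 1 + (1 / (p : ℝ)) * ∑ i ∈ Finset.range k, (1 / (p : ℝ)) ^ i := by
      rw [Finset.sum_range_succ', Finset.mul_sum]
      simp [pow_succ, mul_comm, add_comm]
    constructor
    · have hd : (p : ℤ) ^ 2 ∣ (p : ℤ) ^ (2 * (k + 1)) * m :=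
        dvd_mul_of_dvd_left (pow_dvd_pow _ (by omega)) _
      have hne : (p : ℤ) ^ (2 * (k + 1)) * m ≠ 0 :=
        mul_ne_zero (pow_ne_zero _ hpZ) hm0
      have hdiv : (p : ℤ) ^ (2 * (k + 1)) * m / (p : ℤ) ^ 2
          = (p : ℤ) ^ (2 * k) * m := by
        rw [show 2 * (k + 1) = 2 + 2 * k by omega, pow_add, mul_assoc]
        exact Int.mul_ediv_cancel_left _ hp2Z
      rw [hβrec _ hne hd, hb2 _ hd, hdiv, ih1, hsum]
      ring
    · have hd : (p : ℤ) ^ 2 ∣ (p : ℤ) ^ (2 * (k + 1) + 1) * m :=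
        dvd_mul_of_dvd_left (pow_dvd_pow _ (by omega)) _
      have hne : (p : ℤ) ^ (2 * (k + 1) + 1) * m ≠ 0 :=
        mul_ne_zero (pow_ne_zero _ hpZ) hm0
      have hdiv : (p : ℤ) ^ (2 * (k + 1) + 1) * m / (p : ℤ) ^ 2
          = (p : ℤ) ^ (2 * k + 1) * m := by
        rw [show 2 * (k + 1) + 1 = 2 + (2 * k + 1) by omega, pow_add, mul_assoc]
        exact Int.mul_ediv_cancel_left _ hp2Z
      rw [hβrec _ hne hd, hb2 _ hd, hdiv, ih2, hsum]
      ring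
end
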